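/- arXiv:2603.29276 — 5 statements merged into one kernel-verified Lean document; each statement's English description precedes it below -/
import Mathlib

section
/- Let λ ≥ 0. For every z ∈ ℝⁿ, the number ½‖S_λ(z)‖² is the greatest element of the set {⟨z,x⟩ − f(x) : x ∈ ℝⁿ}; in particular the supremum defining the convex conjugate f*(z) = sup_x (⟨z,x⟩ − f(x)) equals ½‖S_λ(z)‖² and is attained at x = S_λ(z). -/
open scoped RealInnerProductSpace BigOperators

noncomputable def fobj {n : ℕ} (lam : ℝ) (x : EuclideanSpace ℝ (Fin n)) : ℝ :=
  lam * (∑ i, |x i|) + (1 / 2) * ‖x‖ ^ 2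

noncomputable def softShrink {n : ℕ} (lam : ℝ) (x : EuclideanSpace ℝ (Fin n)) :
    EuclideanSpace ℝ (Fin n) :=
  WithLp.toLp 2 (fun i => Real.sign (x i) * max (|x i| - lam) 0)

lemma softShrink_sq (lam t : ℝ) (hlam : 0 ≤ lam) :
    (Real.sign t * max (|t| - lam) 0) ^ 2 = (max (|t| - lam) 0) ^ 2 := by
  rcases lt_trichotomy t 0 with h | h | h
  · rw [Real.sign_of_neg h]; ring
  · subst h; simp [Real.sign_zero, max_eq_right (by linarith : -lam ≤ (0:ℝ))]
  · rw [Real.sign_of_pos h]; ring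

lemma scalar_le (lam t x : ℝ) (hlam : 0 ≤ lam) :
    t * x - (lam * |x| + 1 / 2 * x ^ 2) ≤
      1 / 2 * (Real.sign t * max (|t| - lam) 0) ^ 2 := by
  rw [softShrink_sq lam t hlam]
  obtain ⟨m, hm⟩ : ∃ m, m = max (|t| - lam) 0 := ⟨_, rfl⟩
  rw [← hm]
  have h1 : t * x ≤ |t| * |x| := by
    calc t * x ≤ |t * x| := le_abs_self _
    _ = |t| * |x| := abs_mul t x
  have h2 : |t| - lam ≤ m := hm ▸ le_max_left _ _
  have h3 : (|t| - lam) * |x| ≤ m * |x| := mul_le_mul_of_nonneg_right h2 (abs_nonneg x)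
  nlinarith [sq_nonneg (m - |x|), abs_nonneg x, sq_abs x]

lemma scalar_eq (lam t : ℝ) (hlam : 0 ≤ lam) :
    t * (Real.sign t * max (|t| - lam) 0) -
      (lam * |Real.sign t * max (|t| - lam) 0| +
        1 / 2 * (Real.sign t * max (|t| - lam) 0) ^ 2) =
      1 / 2 * (Real.sign t * max (|t| - lam) 0) ^ 2 := by
  rcases lt_trichotomy t 0 with h | h | h
  · rw [Real.sign_of_neg h, abs_of_neg h]
    rcases le_or_gt (-t - lam) 0 with h2 | h2
    · simp [max_eq_right h2]
    · rw [max_eq_left h2.le, abs_mul, abs_neg, abs_one, abs_of_pos h2]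
      ring
  · subst h
    simp [Real.sign_zero]
  · rw [Real.sign_of_pos h, abs_of_pos h]
    rcases le_or_gt (t - lam) 0 with h2 | h2
    · simp [max_eq_right h2]
    · rw [max_eq_left h2.le, abs_mul, abs_one, abs_of_pos h2]
      ring

/-- The convex conjugate of `f(x) = λ‖x‖₁ + ½‖x‖²` at `z` equals `½‖S_λ(z)‖²`:
this value is the greatest element of `{⟨z,x⟩ − f(x) : x ∈ ℝⁿ}`, and the supremum
is attained at `x = S_λ(z)`. -/
theorem fobj_conjugate {n : ℕ} (lam : ℝ) (hlam : 0 ≤ lam) (z : EuclideanSpace ℝ (Fin n)) :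
    IsGreatest {r : ℝ | ∃ x : EuclideanSpace ℝ (Fin n), r = ⟪z, x⟫ - fobj lam x}
      ((1 / 2) * ‖softShrink lam z‖ ^ 2) ∧
    ⟪z, softShrink lam z⟫ - fobj lam (softShrink lam z) =
      (1 / 2) * ‖softShrink lam z‖ ^ 2 := by
  have hnorm : ∀ x : EuclideanSpace ℝ (Fin n), ‖x‖ ^ 2 = ∑ i, (x i) ^ 2 := by
    intro x
    rw [← real_inner_self_eq_norm_sq]
    simp [PiLp.inner_apply, RCLike.inner_apply, sq]
    rw [← sq, EuclideanSpace.norm_sq_eq]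
    simp [Real.norm_eq_abs, sq_abs, sq]
  have hinner : ∀ x : EuclideanSpace ℝ (Fin n), ⟪z, x⟫ = ∑ i, z i * x i := by
    intro x
    simp [PiLp.inner_apply, RCLike.inner_apply]
    exact Finset.sum_congr rfl fun i _ => mul_comm _ _
  have hval : ∀ x : EuclideanSpace ℝ (Fin n),
      ⟪z, x⟫ - fobj lam x = ∑ i, (z i * x i - (lam * |x i| + 1 / 2 * (x i) ^ 2)) := by
    intro x
    rw [hinner, fobj, hnorm, Finset.mul_sum, Finset.mul_sum]
    rw [← Finset.sum_add_distrib, ← Finset.sum_sub_distrib]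
  have hss : ∀ i, softShrink lam z i = Real.sign (z i) * max (|z i| - lam) 0 := fun i => rfl
  have hrhs : (1 / 2 : ℝ) * ‖softShrink lam z‖ ^ 2
      = ∑ i, 1 / 2 * (Real.sign (z i) * max (|z i| - lam) 0) ^ 2 := by
    rw [hnorm, Finset.mul_sum]
    simp only [softShrink]
  have heq : ⟪z, softShrink lam z⟫ - fobj lam (softShrink lam z) =
      (1 / 2) * ‖softShrink lam z‖ ^ 2 := by
    rw [hval, hrhs]
    exact Finset.sum_congr rfl fun i _ => scalar_eq lam (z i) hlam
  refine ⟨⟨⟨softShrink lam z, heq.symm⟩, ?_⟩, heq⟩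
  rintro r ⟨x, rfl⟩
  rw [hval, hrhs]
  exact Finset.sum_le_sum fun i _ => scalar_le lam (z i) (x i) hlam
end

section
/- Let λ ≥ 0, let A be a real m×n matrix, and let b ∈ ℝᵐ lie in the range of x ↦ Ax. Then there exists exactly one x̂ ∈ ℝⁿ such that Ax̂ = b and f(x̂) ≤ f(x) for every x ∈ ℝⁿ with Ax = b; that is, the regularized Basis Pursuit problem min f(x) subject to Ax = b has a unique solution. -/
open scoped RealInnerProductSpace BigOperators

noncomputable def mulVecE {m n : ℕ} (A : Matrix (Fin m) (Fin n) ℝ)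
    (x : EuclideanSpace ℝ (Fin n)) : EuclideanSpace ℝ (Fin m) :=
  Matrix.toEuclideanLin A x

lemma fobj_nonneg_part {n : ℕ} (lam : ℝ) (hlam : 0 ≤ lam) (x : EuclideanSpace ℝ (Fin n)) :
    (1/2) * ‖x‖^2 ≤ fobj lam x := by
  have h1 : (0:ℝ) ≤ ∑ i, |x i| := Finset.sum_nonneg fun i _ => abs_nonneg _
  have := mul_nonneg hlam h1
  unfold fobj; linarith

lemma fobj_continuous {n : ℕ} (lam : ℝ) : Continuous (fobj (n := n) lam) := by
  unfold fobj
  apply Continuous.add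
  · exact continuous_const.mul (continuous_finset_sum _ fun i _ =>
      ((continuous_apply i).comp (PiLp.continuous_ofLp 2 _)).abs)
  · exact continuous_const.mul ((continuous_norm).pow 2)

lemma fobj_midpoint {n : ℕ} (lam : ℝ) (hlam : 0 ≤ lam) (x y : EuclideanSpace ℝ (Fin n)) :
    fobj lam ((1/2 : ℝ) • (x + y)) ≤ (fobj lam x + fobj lam y) / 2 - (1/8) * ‖x - y‖^2 := by
  have hpar : ‖x + y‖^2 = 2*‖x‖^2 + 2*‖y‖^2 - ‖x - y‖^2 := by
    have h1 := norm_add_sq_real x y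
    have h2 := norm_sub_sq_real x y
    linarith
  have hnorm : ‖(1/2 : ℝ) • (x + y)‖^2 = (1/4) * ‖x + y‖^2 := by
    rw [norm_smul, Real.norm_eq_abs, abs_of_nonneg (by norm_num : (0:ℝ) ≤ 1/2)]
    ring
  have hl1 : (∑ i, |((1/2 : ℝ) • (x + y)) i|) ≤ ((∑ i, |x i|) + (∑ i, |y i|)) / 2 := by
    rw [← Finset.sum_add_distrib, Finset.sum_div]
    apply Finset.sum_le_sum
    intro i _
    simp only [PiLp.smul_apply, PiLp.add_apply, smul_eq_mul]
    have h := abs_add_le (x i) (y i)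
    have : |1/2 * (x i + y i)| = |x i + y i| / 2 := by
      rw [abs_mul, abs_of_nonneg (by norm_num : (0:ℝ) ≤ 1/2)]; ring
    rw [this]
    linarith
  unfold fobj
  have := mul_le_mul_of_nonneg_left hl1 hlam
  rw [hnorm, hpar]
  nlinarith [this]

/-- The regularized Basis Pursuit problem `min f(x) s.t. Ax = b` has a unique solution
whenever `b` lies in the range of `x ↦ Ax`. -/
theorem basis_pursuit_unique_solution {m n : ℕ} (lam : ℝ) (hlam : 0 ≤ lam)
    (A : Matrix (Fin m) (Fin n) ℝ) (b : EuclideanSpace ℝ (Fin m))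
    (hb : ∃ x : EuclideanSpace ℝ (Fin n), mulVecE A x = b) :
    ∃! xhat : EuclideanSpace ℝ (Fin n),
      mulVecE A xhat = b ∧
        ∀ x : EuclideanSpace ℝ (Fin n), mulVecE A x = b → fobj lam xhat ≤ fobj lam x := by
  obtain ⟨x0, hx0⟩ := hb
  have hcontA : Continuous (mulVecE (m := m) (n := n) A) :=
    (Matrix.toEuclideanLin A).continuous_of_finiteDimensional
  set c : ℝ := fobj lam x0 with hc
  have hc0 : 0 ≤ c := le_trans (by positivity) (fobj_nonneg_part lam hlam x0)
  set R : ℝ := Real.sqrt (2 * c) with hR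
  have hx0R : ‖x0‖ ≤ R := by
    have h2 : ‖x0‖^2 ≤ 2*c := by nlinarith [fobj_nonneg_part lam hlam x0]
    calc ‖x0‖ = Real.sqrt (‖x0‖^2) := (Real.sqrt_sq (norm_nonneg _)).symm
      _ ≤ R := Real.sqrt_le_sqrt h2
  -- the compact set
  set S : Set (EuclideanSpace ℝ (Fin n)) :=
    {x | mulVecE A x = b} ∩ Metric.closedBall 0 R with hS
  have hSclosed : IsClosed S :=
    (isClosed_singleton.preimage hcontA).inter Metric.isClosed_closedBall
  have hScompact : IsCompact S := by
    apply (isCompact_closedBall (0 : EuclideanSpace ℝ (Fin n)) R).of_isClosed_subset hSclosed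
    exact Set.inter_subset_right
  have hSne : S.Nonempty := ⟨x0, hx0, by simpa using hx0R⟩
  obtain ⟨xhat, hxhatS, hmin⟩ :=
    hScompact.exists_isMinOn hSne (fobj_continuous lam).continuousOn
  have hxhatb : mulVecE A xhat = b := hxhatS.1
  -- xhat is a global minimizer over the feasible set
  have hglobal : ∀ x, mulVecE A x = b → fobj lam xhat ≤ fobj lam x := by
    intro x hx
    by_cases hxball : ‖x‖ ≤ R
    · exact hmin ⟨hx, by simpa using hxball⟩
    · push_neg at hxball
      have hle : fobj lam xhat ≤ c := hmin ⟨hx0, by simpa using hx0R⟩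
      have hR2 : R^2 = 2*c := Real.sq_sqrt (by linarith)
      have h2 : (1/2 : ℝ) * ‖x‖^2 ≤ fobj lam x := fobj_nonneg_part lam hlam x
      nlinarith [Real.sqrt_nonneg (2*c)]
  refine ⟨xhat, ⟨hxhatb, hglobal⟩, ?_⟩
  rintro y ⟨hyb, hymin⟩
  -- uniqueness via strict convexity
  have hAz : mulVecE A ((1/2 : ℝ) • (y + xhat)) = b := by
    unfold mulVecE at *
    rw [map_smul, map_add, hyb, hxhatb, smul_add, ← add_smul]
    norm_num
  have h1 : fobj lam y ≤ fobj lam xhat := hymin xhat hxhatb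
  have h2 : fobj lam xhat ≤ fobj lam y := hglobal y hyb
  have heq : fobj lam y = fobj lam xhat := le_antisymm h1 h2
  have h3 : fobj lam y ≤ fobj lam ((1/2 : ℝ) • (y + xhat)) := hymin _ hAz
  have h4 := fobj_midpoint lam hlam y xhat
  have h5 : ‖y - xhat‖^2 ≤ 0 := by nlinarith
  have h6 : ‖y - xhat‖ = 0 := by nlinarith [norm_nonneg (y - xhat), sq_nonneg ‖y - xhat‖]
  exact sub_eq_zero.mp (norm_eq_zero.mp h6)
end

section
/- Let λ ≥ 0, let A be a real m×n matrix, x̂ ∈ ℝⁿ, and b = Ax̂. For every y ∈ ℝᵐ, setting x* = Aᵀy and x = S_λ(x*), the Bregman distance satisfies f(x̂) − f(x) − ⟨x*, x̂ − x⟩ = Ψ(y) + f(x̂), where Ψ(y) = ½‖S_λ(Aᵀy)‖² − ⟨y, b⟩ is the dual function. -/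
open scoped RealInnerProductSpace BigOperators
open Matrix

lemma key_pointwise (lam s : ℝ) (hlam : 0 ≤ lam) :
    s * (Real.sign s * max (|s| - lam) 0) =
      lam * |Real.sign s * max (|s| - lam) 0| +
        (Real.sign s * max (|s| - lam) 0) * (Real.sign s * max (|s| - lam) 0) := by
  rcases le_or_gt |s| lam with h | h
  · rw [max_eq_right (by linarith)]; simp
  · have hs : s ≠ 0 := by
      intro h0; rw [h0] at h; simp at h; linarith
    rw [max_eq_left (by linarith)]
    rcases lt_trichotomy s 0 with hneg | h0 | hpos
    · rw [Real.sign_of_neg hneg, abs_of_neg hneg]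
      rw [abs_of_nonpos (by nlinarith [abs_of_neg hneg])]
      nlinarith [abs_of_neg hneg]
    · exact absurd h0 hs
    · rw [Real.sign_of_pos hpos, abs_of_pos hpos]
      rw [abs_of_nonneg (by nlinarith [abs_of_pos hpos])]
      nlinarith [abs_of_pos hpos]

/-- For `x* = Aᵀy`, `x = S_λ(x*)` and `b = Ax̂`, the Bregman distance between `x` and `x̂`
equals `Ψ(y) + f(x̂)`, where `Ψ(y) = ½‖S_λ(Aᵀy)‖² − ⟨y,b⟩` is the dual function. -/
theorem bregman_eq_dual_plus_fixed {m n : ℕ} (lam : ℝ) (hlam : 0 ≤ lam)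
    (A : Matrix (Fin m) (Fin n) ℝ) (xhat : EuclideanSpace ℝ (Fin n))
    (b : EuclideanSpace ℝ (Fin m)) (hb : b = mulVecE A xhat) :
    ∀ y : EuclideanSpace ℝ (Fin m),
      fobj lam xhat - fobj lam (softShrink lam (mulVecE Aᵀ y)) -
          ⟪mulVecE Aᵀ y, xhat - softShrink lam (mulVecE Aᵀ y)⟫ =
        ((1 / 2) * ‖softShrink lam (mulVecE Aᵀ y)‖ ^ 2 - ⟪y, b⟫) + fobj lam xhat := by
  intro y
  set xs : EuclideanSpace ℝ (Fin n) := mulVecE Aᵀ y with hxs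
  set x : EuclideanSpace ℝ (Fin n) := softShrink lam xs with hx
  -- adjoint identity
  have hadj : ⟪xs, xhat⟫ = ⟪y, b⟫ := by
    rw [hb]
    simp only [PiLp.inner_apply, RCLike.inner_apply, starRingEnd_apply, star_trivial,
      hxs, mulVecE, Matrix.toEuclideanLin_apply, PiLp.toLp_apply,
      WithLp.ofLp_toLp, Matrix.mulVec, dotProduct,
      Matrix.transpose_apply]
    simp_rw [Finset.sum_mul, Finset.mul_sum]
    rw [Finset.sum_comm]
    exact Finset.sum_congr rfl fun _ _ => Finset.sum_congr rfl fun _ _ => by ring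
  -- key inner product identity
  have hkey : ⟪xs, x⟫ = lam * (∑ i, |x i|) + ‖x‖ ^ 2 := by
    rw [← real_inner_self_eq_norm_sq]
    simp only [PiLp.inner_apply, RCLike.inner_apply, starRingEnd_apply, star_trivial]
    rw [Finset.mul_sum, ← Finset.sum_add_distrib]
    congr 1; ext i
    exact (mul_comm _ _).trans (key_pointwise lam (xs i) hlam)
  rw [inner_sub_right, hadj, hkey]
  simp only [fobj]
  ring
end

section
/- Let λ ≥ 0, let A be a real m×n matrix, let x̂ ∈ ℝⁿ, set b = Ax̂, and suppose f(x̂) ≤ f(x) for every x with Ax = b. Define Ψ(y) = ½‖S_λ(Aᵀy)‖² − ⟨y, b⟩ and Ψ̂ = ⨅_{y ∈ ℝᵐ} Ψ(y). Then for every y ∈ ℝᵐ, setting x* = Aᵀy and x = S_λ(x*), the Bregman distance to the primal solution equals the dual optimality gap: f(x̂) − f(x) − ⟨x*, x̂ − x⟩ = Ψ(y) − Ψ̂. -/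
open scoped RealInnerProductSpace BigOperators
open Matrix

/-! ### Auxiliary scalar lemmas -/

noncomputable def ssf (lam t : ℝ) : ℝ := max (t - lam) 0 - max (-t - lam) 0

lemma ssf_eq (lam t : ℝ) (hlam : 0 ≤ lam) :
    Real.sign t * max (|t| - lam) 0 = ssf lam t := by
  unfold ssf
  rcases lt_trichotomy t 0 with h | h | h
  · rw [Real.sign_of_neg h, abs_of_neg h, max_eq_right (a := t - lam) (by linarith)]
    ring
  · subst h; simp
  · rw [Real.sign_of_pos h, abs_of_pos h, max_eq_right (a := -t - lam) (by linarith)]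
    ring

lemma abs_ssf (lam t : ℝ) (hlam : 0 ≤ lam) :
    |ssf lam t| = max (t - lam) 0 + max (-t - lam) 0 := by
  unfold ssf
  rcases le_or_gt t 0 with h | h
  · rw [max_eq_right (a := t - lam) (by linarith), abs_of_nonpos (by simp)]
    ring
  · rw [max_eq_right (a := -t - lam) (by linarith), abs_of_nonneg (by simp)]
    ring

lemma sq_ssf (lam t : ℝ) (hlam : 0 ≤ lam) :
    (ssf lam t)^2 = (max (t - lam) 0)^2 + (max (-t - lam) 0)^2 := by
  unfold ssf
  rcases le_or_gt t 0 with h | h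
  · rw [max_eq_right (a := t - lam) (by linarith)]; ring
  · rw [max_eq_right (a := -t - lam) (by linarith)]; ring

lemma mul_ssf (lam t : ℝ) (hlam : 0 ≤ lam) :
    t * ssf lam t = lam * |ssf lam t| + (ssf lam t)^2 := by
  rw [abs_ssf lam t hlam]
  unfold ssf
  rcases max_cases (t - lam) 0 with ⟨e1, h1⟩ | ⟨e1, h1⟩ <;>
    rcases max_cases (-t - lam) 0 with ⟨e2, h2⟩ | ⟨e2, h2⟩ <;>
    rw [e1, e2] <;> nlinarith

lemma subgrad_ssf (lam t u : ℝ) (hlam : 0 ≤ lam) :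
    lam * |ssf lam t| + (1/2) * (ssf lam t)^2 + t * (u - ssf lam t) ≤
      lam * |u| + (1/2) * u^2 := by
  rw [abs_ssf lam t hlam]
  unfold ssf
  rcases abs_cases u with ⟨hu, hu'⟩ | ⟨hu, hu'⟩ <;> rw [hu] <;>
  rcases max_cases (t - lam) 0 with ⟨e1, h1⟩ | ⟨e1, h1⟩ <;>
    rcases max_cases (-t - lam) 0 with ⟨e2, h2⟩ | ⟨e2, h2⟩ <;>
    rw [e1, e2] <;>
    nlinarith [sq_nonneg (u - t + lam), sq_nonneg (u - t - lam), sq_nonneg u, sq_nonneg (u + t)]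

lemma clip_ssf (lam t : ℝ) (hlam : 0 ≤ lam) : (t - ssf lam t)^2 ≤ lam^2 := by
  unfold ssf
  rcases max_cases (t - lam) 0 with ⟨e1, h1⟩ | ⟨e1, h1⟩ <;>
    rcases max_cases (-t - lam) 0 with ⟨e2, h2⟩ | ⟨e2, h2⟩ <;>
    rw [e1, e2] <;> nlinarith

lemma halfmaxsq_bound (x h : ℝ) :
    |(1/2) * (max (x + h) 0)^2 - (1/2) * (max x 0)^2 - max x 0 * h| ≤ (1/2) * h^2 := by
  rcases max_cases x 0 with ⟨e1, h1⟩ | ⟨e1, h1⟩ <;>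
    rcases max_cases (x + h) 0 with ⟨e2, h2⟩ | ⟨e2, h2⟩ <;>
    rw [e1, e2] <;> rw [abs_le] <;> constructor <;>
    nlinarith [sq_nonneg (x + h), sq_nonneg h, sq_nonneg x]

lemma hasDerivAt_halfmaxsq (x : ℝ) :
    HasDerivAt (fun t => (1/2) * (max t 0)^2) (max x 0) x := by
  rw [hasDerivAt_iff_isLittleO, Asymptotics.isLittleO_iff]
  intro c hc
  rw [Metric.eventually_nhds_iff]
  refine ⟨2 * c, by linarith, fun y hy => ?_⟩
  have hb := halfmaxsq_bound x (y - x)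
  simp only [add_sub_cancel] at hb
  have h1 : ‖(1/2) * (max y 0)^2 - (1/2) * (max x 0)^2 - (y - x) • max x 0‖ ≤
      (1/2) * (y - x)^2 := by
    rw [smul_eq_mul, Real.norm_eq_abs]
    calc |(1/2) * (max y 0)^2 - (1/2) * (max x 0)^2 - (y-x) * max x 0|
        = |(1/2) * (max y 0)^2 - (1/2) * (max x 0)^2 - max x 0 * (y-x)| := by ring_nf
      _ ≤ (1/2) * (y-x)^2 := hb
  refine h1.trans ?_
  have hyx : |y - x| < 2 * c := by rw [Real.dist_eq] at hy; exact hy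
  rw [Real.norm_eq_abs]
  nlinarith [abs_nonneg (y - x), sq_abs (y - x)]

lemma hasDerivAt_pair (lam a c : ℝ) :
    HasDerivAt (fun s : ℝ =>
      (1/2) * (max (a + s * c - lam) 0)^2 + (1/2) * (max (-(a + s * c) - lam) 0)^2)
      (ssf lam a * c) 0 := by
  have h1 : HasDerivAt (fun s : ℝ => a + s * c - lam) c 0 := by
    simpa using (((hasDerivAt_id (0:ℝ)).mul_const c).const_add a).sub_const lam
  have h2 : HasDerivAt (fun s : ℝ => -(a + s * c) - lam) (-c) 0 := by
    simpa using ((((hasDerivAt_id (0:ℝ)).mul_const c).const_add a).neg).sub_const lam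
  have e1 : a + 0 * c - lam = a - lam := by ring
  have e2 : -(a + 0 * c) - lam = -a - lam := by ring
  have H1 := (hasDerivAt_halfmaxsq (a + 0 * c - lam)).comp 0 h1
  have H2 := (hasDerivAt_halfmaxsq (-(a + 0 * c) - lam)).comp 0 h2
  rw [e1] at H1; rw [e2] at H2
  have := H1.add H2
  exact this.congr_deriv (by unfold ssf; ring)

lemma tendsto_gaux (c d : ℝ) (hc : 0 ≤ c) (hd : 0 ≤ d) :
    Filter.Tendsto (fun r : ℝ => (1/2) * (max (r - c) 0)^2 - r * d)
      Filter.atTop Filter.atTop := by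
  apply Filter.tendsto_atTop_mono' Filter.atTop ?_ Filter.tendsto_id
  filter_upwards [Filter.eventually_ge_atTop (2*c + 2*d + 2)] with r hr
  have hm : max (r - c) 0 = r - c := max_eq_left (by linarith)
  rw [hm]
  simp only [id_eq]
  have hr0 : (0:ℝ) ≤ r := by linarith
  nlinarith [mul_nonneg (by linarith : (0:ℝ) ≤ r - (2*c + 2*d + 2)) hr0, sq_nonneg c]

/-! ### Vector-level lemmas -/

lemma inner_sum' {n : ℕ} (x y : EuclideanSpace ℝ (Fin n)) : ⟪x, y⟫ = ∑ i, x i * y i := by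
  simp [PiLp.inner_apply, RCLike.inner_apply, mul_comm]

lemma norm_sq_sum' {n : ℕ} (x : EuclideanSpace ℝ (Fin n)) : ‖x‖^2 = ∑ i, (x i)^2 := by
  rw [← real_inner_self_eq_norm_sq, inner_sum']
  exact Finset.sum_congr rfl fun i _ => (sq (x i)).symm

lemma mulVecE_apply {m n : ℕ} (A : Matrix (Fin m) (Fin n) ℝ)
    (x : EuclideanSpace ℝ (Fin n)) (i : Fin m) : mulVecE A x i = ∑ j, A i j * x j := by
  simp [mulVecE, Matrix.toEuclideanLin_apply, Matrix.mulVec, dotProduct]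

lemma adjoint_inner {m n : ℕ} (A : Matrix (Fin m) (Fin n) ℝ)
    (y : EuclideanSpace ℝ (Fin m)) (x : EuclideanSpace ℝ (Fin n)) :
    ⟪mulVecE Aᵀ y, x⟫ = ⟪y, mulVecE A x⟫ := by
  simp only [inner_sum', mulVecE_apply, Matrix.transpose_apply, Finset.sum_mul, Finset.mul_sum]
  rw [Finset.sum_comm]
  exact Finset.sum_congr rfl fun i _ => Finset.sum_congr rfl fun j _ => by ring

lemma softShrink_apply {n : ℕ} (lam : ℝ) (hlam : 0 ≤ lam) (x : EuclideanSpace ℝ (Fin n))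
    (i : Fin n) : softShrink lam x i = ssf lam (x i) :=
  ssf_eq lam (x i) hlam

noncomputable def Fdual {n : ℕ} (lam : ℝ) (xhat t : EuclideanSpace ℝ (Fin n)) : ℝ :=
  (∑ i, ((1/2) * (max (t i - lam) 0)^2 + (1/2) * (max (-(t i) - lam) 0)^2)) - ⟪t, xhat⟫

lemma Fdual_eq {n : ℕ} (lam : ℝ) (hlam : 0 ≤ lam) (xhat t : EuclideanSpace ℝ (Fin n)) :
    Fdual lam xhat t = (1/2) * ‖softShrink lam t‖^2 - ⟪t, xhat⟫ := by
  unfold Fdual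
  rw [norm_sq_sum', Finset.mul_sum]
  congr 1
  refine Finset.sum_congr rfl fun i _ => ?_
  rw [softShrink_apply lam hlam, sq_ssf lam (t i) hlam]
  ring

lemma Fdual_cont {n : ℕ} (lam : ℝ) (xhat : EuclideanSpace ℝ (Fin n)) :
    Continuous (Fdual lam xhat) := by
  unfold Fdual
  apply Continuous.sub
  · apply continuous_finset_sum
    intro i _
    have hc : Continuous (fun t : EuclideanSpace ℝ (Fin n) => t i) :=
      (EuclideanSpace.proj i).continuous
    fun_prop
  · exact continuous_id.inner continuous_const

lemma Fdual_coercive {n : ℕ} (lam : ℝ) (hlam : 0 ≤ lam) (xhat t : EuclideanSpace ℝ (Fin n)) :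
    (1/2) * (max (‖t‖ - lam * Real.sqrt n) 0)^2 - ‖t‖ * ‖xhat‖ ≤ Fdual lam xhat t := by
  rw [Fdual_eq lam hlam]
  have h1 : ⟪t, xhat⟫ ≤ ‖t‖ * ‖xhat‖ := real_inner_le_norm t xhat
  have h2 : ‖t - softShrink lam t‖ ≤ lam * Real.sqrt n := by
    have hsq : ‖t - softShrink lam t‖^2 ≤ (lam * Real.sqrt n)^2 := by
      rw [norm_sq_sum', mul_pow, Real.sq_sqrt (by positivity : (0:ℝ) ≤ (n:ℝ))]
      calc ∑ i, ((t - softShrink lam t) i)^2 ≤ ∑ _i : Fin n, lam^2 := by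
            refine Finset.sum_le_sum fun i _ => ?_
            have : (t - softShrink lam t) i = t i - ssf lam (t i) := by
              simp [softShrink_apply lam hlam]
            rw [this]
            exact clip_ssf lam (t i) hlam
        _ = lam^2 * n := by simp [Finset.sum_const, mul_comm]
    have hnn : (0:ℝ) ≤ lam * Real.sqrt n := by positivity
    nlinarith [norm_nonneg (t - softShrink lam t)]
  have h3 : max (‖t‖ - lam * Real.sqrt n) 0 ≤ ‖softShrink lam t‖ := by
    apply max_le _ (norm_nonneg _)
    have : ‖t‖ ≤ ‖softShrink lam t‖ + ‖t - softShrink lam t‖ := by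
      calc ‖t‖ = ‖softShrink lam t + (t - softShrink lam t)‖ := by rw [add_sub_cancel]
        _ ≤ _ := norm_add_le _ _
    linarith
  have h4 : (max (‖t‖ - lam * Real.sqrt n) 0)^2 ≤ ‖softShrink lam t‖^2 :=
    pow_le_pow_left₀ (le_max_right _ _) h3 2
  linarith

/-! ### Main theorem -/

/-- Bregman distance to the primal solution equals the dual optimality gap:
with `Ψ(y) = ½‖S_λ(Aᵀy)‖² − ⟨y,b⟩`, `Ψ̂ = ⨅_y Ψ(y)`, `x* = Aᵀy`, `x = S_λ(x*)`, one has
`f(x̂) − f(x) − ⟨x*, x̂ − x⟩ = Ψ(y) − Ψ̂`. -/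
theorem bregman_eq_dual_gap {m n : ℕ} (lam : ℝ) (hlam : 0 ≤ lam)
    (A : Matrix (Fin m) (Fin n) ℝ) (xhat : EuclideanSpace ℝ (Fin n))
    (b : EuclideanSpace ℝ (Fin m)) (hb : b = mulVecE A xhat)
    (hopt : ∀ x : EuclideanSpace ℝ (Fin n), mulVecE A x = b → fobj lam xhat ≤ fobj lam x)
    (Psi : EuclideanSpace ℝ (Fin m) → ℝ)
    (hPsi : ∀ y, Psi y = (1 / 2) * ‖softShrink lam (mulVecE Aᵀ y)‖ ^ 2 - ⟪y, b⟫) :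
    ∀ y : EuclideanSpace ℝ (Fin m),
      fobj lam xhat - fobj lam (softShrink lam (mulVecE Aᵀ y)) -
          ⟪mulVecE Aᵀ y, xhat - softShrink lam (mulVecE Aᵀ y)⟫ =
        Psi y - ⨅ y' : EuclideanSpace ℝ (Fin m), Psi y' := by
  -- inner product with the shrinkage
  have hxapp : ∀ (t : EuclideanSpace ℝ (Fin n)) (i : Fin n),
      softShrink lam t i = ssf lam (t i) := fun t i => softShrink_apply lam hlam t i
  have hinnerS : ∀ t : EuclideanSpace ℝ (Fin n),
      ⟪t, softShrink lam t⟫ = lam * (∑ i, |softShrink lam t i|) + ‖softShrink lam t‖^2 := by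
    intro t
    rw [inner_sum', norm_sq_sum', Finset.mul_sum, ← Finset.sum_add_distrib]
    refine Finset.sum_congr rfl fun i _ => ?_
    rw [hxapp t i]
    exact mul_ssf lam (t i) hlam
  -- key identity: LHS = Psi y + fobj xhat
  have key1 : ∀ y : EuclideanSpace ℝ (Fin m),
      fobj lam xhat - fobj lam (softShrink lam (mulVecE Aᵀ y)) -
          ⟪mulVecE Aᵀ y, xhat - softShrink lam (mulVecE Aᵀ y)⟫ =
        Psi y + fobj lam xhat := by
    intro y
    rw [hPsi y, inner_sub_right, adjoint_inner, ← hb, hinnerS (mulVecE Aᵀ y)]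
    unfold fobj
    ring
  -- subgradient inequality: Bregman distance nonneg, i.e. Psi y ≥ -fobj xhat
  have key2 : ∀ y : EuclideanSpace ℝ (Fin m), -fobj lam xhat ≤ Psi y := by
    intro y
    have hD : 0 ≤ fobj lam xhat - fobj lam (softShrink lam (mulVecE Aᵀ y)) -
        ⟪mulVecE Aᵀ y, xhat - softShrink lam (mulVecE Aᵀ y)⟫ := by
      set t := mulVecE Aᵀ y with ht
      have hsum : fobj lam (softShrink lam t) + ⟪t, xhat - softShrink lam t⟫ ≤
          fobj lam xhat := by
        unfold fobj
        rw [inner_sum', norm_sq_sum', norm_sq_sum', Finset.mul_sum, Finset.mul_sum,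
          Finset.mul_sum, Finset.mul_sum, ← Finset.sum_add_distrib, ← Finset.sum_add_distrib,
          ← Finset.sum_add_distrib]
        refine Finset.sum_le_sum fun i _ => ?_
        have hsub : (xhat - softShrink lam t) i = xhat i - ssf lam (t i) := by
          simp [hxapp t i]
        rw [hxapp t i, hsub]
        have := subgrad_ssf lam (t i) (xhat i) hlam
        linarith
      linarith
    have := key1 y
    linarith
  -- existence of dual minimizer
  have hPsiF : ∀ y, Psi y = Fdual lam xhat (mulVecE Aᵀ y) := by
    intro y
    rw [hPsi y, Fdual_eq lam hlam, adjoint_inner, ← hb]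
  obtain ⟨w₀, hw₀⟩ : ∃ w : (LinearMap.range (Matrix.toEuclideanLin Aᵀ) :
      Submodule ℝ (EuclideanSpace ℝ (Fin n))),
      ∀ w' : (LinearMap.range (Matrix.toEuclideanLin Aᵀ) :
        Submodule ℝ (EuclideanSpace ℝ (Fin n))), Fdual lam xhat w ≤ Fdual lam xhat w' := by
    apply Continuous.exists_forall_le ((Fdual_cont lam xhat).comp continuous_subtype_val)
    apply Filter.tendsto_atTop_mono
      (fun w : (LinearMap.range (Matrix.toEuclideanLin Aᵀ) :
        Submodule ℝ (EuclideanSpace ℝ (Fin n))) => Fdual_coercive lam hlam xhat (w : _))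
    exact (tendsto_gaux (lam * Real.sqrt n) ‖xhat‖ (by positivity) (norm_nonneg _)).comp
      tendsto_norm_cocompact_atTop
  obtain ⟨y₀, hy₀⟩ := w₀.2
  have hmin : ∀ y, Psi y₀ ≤ Psi y := by
    intro y
    rw [hPsiF, hPsiF]
    have h1 := hw₀ ⟨mulVecE Aᵀ y, ⟨y, rfl⟩⟩
    have h2 : (w₀ : EuclideanSpace ℝ (Fin n)) = mulVecE Aᵀ y₀ := hy₀.symm
    rw [h2] at h1
    exact h1
  -- first-order optimality: A x₀ = b
  set t₀ : EuclideanSpace ℝ (Fin n) := mulVecE Aᵀ y₀ with ht₀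
  set x₀ : EuclideanSpace ℝ (Fin n) := softShrink lam t₀ with hx₀
  have hAx₀ : mulVecE A x₀ = b := by
    have key : ∀ v : EuclideanSpace ℝ (Fin m), ⟪v, mulVecE A x₀ - b⟫ = 0 := by
      intro v
      set u : EuclideanSpace ℝ (Fin n) := mulVecE Aᵀ v with hu
      set φ : ℝ → ℝ := fun s => Psi (y₀ + s • v) with hφ
      have hφmin : ∀ s, φ 0 ≤ φ s := by
        intro s
        have : φ 0 = Psi y₀ := by simp [hφ]
        rw [this]
        exact hmin _
      have hform : ∀ s, φ s =
          (∑ i, ((1/2) * (max (t₀ i + s * u i - lam) 0)^2 +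
            (1/2) * (max (-(t₀ i + s * u i) - lam) 0)^2)) - ⟪t₀, xhat⟫ - s * ⟪u, xhat⟫ := by
        intro s
        have hBy : mulVecE Aᵀ (y₀ + s • v) = t₀ + s • u := by
          simp [ht₀, hu, mulVecE, map_add, _root_.map_smul]
        rw [hφ]
        simp only
        rw [hPsiF, hBy, Fdual_eq lam hlam]
        have hcoord : ∀ i, (t₀ + s • u) i = t₀ i + s * u i := by
          intro i; rfl
        have hnrm : (1/2) * ‖softShrink lam (t₀ + s • u)‖^2 =
            ∑ i, ((1/2) * (max (t₀ i + s * u i - lam) 0)^2 +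
              (1/2) * (max (-(t₀ i + s * u i) - lam) 0)^2) := by
          rw [norm_sq_sum', Finset.mul_sum]
          refine Finset.sum_congr rfl fun i _ => ?_
          rw [hxapp _ i, hcoord i, sq_ssf lam _ hlam]
          ring
        rw [hnrm, inner_add_left, real_inner_smul_left]
        ring
      have hφder : HasDerivAt φ ((∑ i, ssf lam (t₀ i) * u i) - ⟪u, xhat⟫) 0 := by
        have heq : φ = fun s =>
            (∑ i, ((1/2) * (max (t₀ i + s * u i - lam) 0)^2 +
              (1/2) * (max (-(t₀ i + s * u i) - lam) 0)^2)) - ⟪t₀, xhat⟫ - s * ⟪u, xhat⟫ :=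
          funext hform
        rw [heq]
        have hA : HasDerivAt (fun s : ℝ =>
            (∑ i, ((1/2) * (max (t₀ i + s * u i - lam) 0)^2 +
              (1/2) * (max (-(t₀ i + s * u i) - lam) 0)^2)))
            (∑ i, ssf lam (t₀ i) * u i) 0 :=
          HasDerivAt.fun_sum fun i _ => hasDerivAt_pair lam (t₀ i) (u i)
        have hB : HasDerivAt (fun s : ℝ => s * ⟪u, xhat⟫) ⟪u, xhat⟫ 0 := by
          simpa using (hasDerivAt_id (0:ℝ)).mul_const ⟪u, xhat⟫
        exact (hA.sub_const ⟪t₀, xhat⟫).sub hB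
      have hloc : IsLocalMin φ 0 := Filter.Eventually.of_forall hφmin
      have hzero := hloc.hasDerivAt_eq_zero hφder
      have hs1 : (∑ i, ssf lam (t₀ i) * u i) = ⟪u, x₀⟫ := by
        rw [inner_sum']
        exact Finset.sum_congr rfl fun i _ => by rw [hx₀, hxapp t₀ i]; ring
      rw [hs1, hu, adjoint_inner, adjoint_inner, ← hb] at hzero
      rw [inner_sub_right]
      linarith
    have h := key (mulVecE A x₀ - b)
    rwa [real_inner_self_eq_norm_sq, pow_eq_zero_iff (by norm_num), norm_eq_zero,
      sub_eq_zero] at h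
  -- value at the minimizer
  have hy₀le : Psi y₀ ≤ -fobj lam xhat := by
    have h1 := key1 y₀
    have h2 : ⟪t₀, xhat - x₀⟫ = 0 := by
      rw [adjoint_inner]
      have : mulVecE A (xhat - x₀) = 0 := by
        rw [mulVecE, map_sub, ← mulVecE, ← mulVecE, ← hb, hAx₀, sub_self]
      rw [this, inner_zero_right]
    have h3 := hopt x₀ hAx₀
    rw [← ht₀, ← hx₀] at h1
    rw [h2] at h1
    linarith
  -- infimum value
  have hbdd : BddBelow (Set.range Psi) := ⟨-fobj lam xhat, by
    rintro z ⟨y, rfl⟩; exact key2 y⟩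
  have hinf : (⨅ y' : EuclideanSpace ℝ (Fin m), Psi y') = -fobj lam xhat :=
    le_antisymm ((ciInf_le hbdd y₀).trans hy₀le) (le_ciInf key2)
  intro y
  rw [hinf, key1 y]
  ring
end

section
/- (Optimal momentum parameters.) Let u, v ∈ ℝᵐ be linearly independent, let G ∈ ℝᵐ satisfy ⟨u, G⟩ = ‖u‖², and let C > 0. Define h(α, w) = ⟨w·v − α·u, G⟩ + (C/2)·‖w·v − α·u‖², and set Δ = ‖u‖²‖v‖² − ⟨u,v⟩², α* = (‖u‖²‖v‖² − ⟨u,v⟩·⟨G,v⟩)/(C·Δ), w* = ‖u‖²·(⟨u,v⟩ − ⟨G,v⟩)/(C·Δ). Then (α*, w*) minimizes h: for all α, w ∈ ℝ, h(α*, w*) ≤ h(α, w). -/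
open scoped RealInnerProductSpace BigOperators

private lemma aux_quadratic_min (a b c g C Δ A W α w : ℝ) (ha0 : 0 < a) (hC : 0 < C)
    (hΔ : Δ = a * b - c ^ 2) (hΔ0 : 0 < Δ)
    (hA : C * Δ * A = a * b - c * g) (hW : C * Δ * W = a * (c - g)) :
    W * g - A * a + (C / 2) * (W ^ 2 * b - 2 * A * W * c + A ^ 2 * a) ≤
      w * g - α * a + (C / 2) * (w ^ 2 * b - 2 * α * w * c + α ^ 2 * a) := by
  have gα : C * (A * a - W * c) = a := by
    have key : Δ * (C * (A * a - W * c)) = Δ * a := by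
      linear_combination a * hA - c * hW - a * hΔ
    exact mul_left_cancel₀ (ne_of_gt hΔ0) key
  have gw : C * (W * b - A * c) = -g := by
    have key : Δ * (C * (W * b - A * c)) = Δ * (-g) := by
      linear_combination b * hW - c * hA + g * hΔ
    exact mul_left_cancel₀ (ne_of_gt hΔ0) key
  have key : 2 * a * ((w * g - α * a + (C / 2) * (w ^ 2 * b - 2 * α * w * c + α ^ 2 * a)) -
      (W * g - A * a + (C / 2) * (W ^ 2 * b - 2 * A * W * c + A ^ 2 * a))) =
      C * ((a * (α - A) - c * (w - W)) ^ 2 + (w - W) ^ 2 * Δ) := by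
    linear_combination (2 * a * (w - W)) * gw + (2 * a * (α - A)) * gα - (C * (w - W) ^ 2) * hΔ
  nlinarith [key, sq_nonneg (a * (α - A) - c * (w - W)),
    mul_nonneg hC.le (mul_nonneg (sq_nonneg (w - W)) hΔ0.le)]

/-- Optimal momentum parameters: for linearly independent `u, v`, `⟨u,G⟩ = ‖u‖²` and `C > 0`,
the pair `(α*, w*)` minimizes `h(α, w) = ⟨w·v − α·u, G⟩ + (C/2)‖w·v − α·u‖²`. -/
theorem optimal_momentum_parameters {m : ℕ} (u v G : EuclideanSpace ℝ (Fin m))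
    (hind : LinearIndependent ℝ ![u, v]) (huG : ⟪u, G⟫ = ‖u‖ ^ 2)
    (C : ℝ) (hC : 0 < C)
    (h : ℝ → ℝ → ℝ)
    (hh : ∀ α w : ℝ, h α w = ⟪w • v - α • u, G⟫ + (C / 2) * ‖w • v - α • u‖ ^ 2)
    (Δ αstar wstar : ℝ)
    (hΔ : Δ = ‖u‖ ^ 2 * ‖v‖ ^ 2 - ⟪u, v⟫ ^ 2)
    (hα : αstar = (‖u‖ ^ 2 * ‖v‖ ^ 2 - ⟪u, v⟫ * ⟪G, v⟫) / (C * Δ))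
    (hw : wstar = ‖u‖ ^ 2 * (⟪u, v⟫ - ⟪G, v⟫) / (C * Δ)) :
    ∀ α w : ℝ, h αstar wstar ≤ h α w := by
  have hu0 : u ≠ 0 := by have := hind.ne_zero 0; simpa using this
  have hv0 : v ≠ 0 := by have := hind.ne_zero 1; simpa using this
  have ha0 : 0 < ‖u‖ ^ 2 := by have := norm_pos_iff.mpr hu0; positivity
  have hb0 : 0 < ‖v‖ ^ 2 := by have := norm_pos_iff.mpr hv0; positivity
  -- strict Cauchy-Schwarz
  have hΔ0 : 0 < Δ := by
    have hcs := abs_real_inner_le_norm u v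
    have hle : ⟪u, v⟫ ^ 2 ≤ ‖u‖ ^ 2 * ‖v‖ ^ 2 := by
      have h2 : |⟪u, v⟫| ^ 2 ≤ (‖u‖ * ‖v‖) ^ 2 :=
        pow_le_pow_left₀ (abs_nonneg _) hcs 2
      rw [sq_abs] at h2; nlinarith
    rcases lt_or_eq_of_le hle with hlt | heq
    · rw [hΔ]; linarith
    · exfalso
      have habs : ‖⟪u, v⟫‖ = ‖u‖ * ‖v‖ := by
        rw [Real.norm_eq_abs]
        have h1 : |⟪u, v⟫| ^ 2 = (‖u‖ * ‖v‖) ^ 2 := by rw [sq_abs]; nlinarith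
        exact (sq_eq_sq₀ (abs_nonneg _) (by positivity)).mp h1
      obtain ⟨r, hr0, hrv⟩ := (norm_inner_eq_norm_iff hu0 hv0).mp habs
      have h2 := (linearIndependent_fin2.mp hind).2 r⁻¹
      exact h2 (by rw [hrv]; simp [smul_smul, inv_mul_cancel₀ hr0])
  have hCΔ : C * Δ ≠ 0 := by positivity
  have hA : C * Δ * αstar = ‖u‖ ^ 2 * ‖v‖ ^ 2 - ⟪u, v⟫ * ⟪G, v⟫ := by
    rw [hα]; field_simp
  have hW : C * Δ * wstar = ‖u‖ ^ 2 * (⟪u, v⟫ - ⟪G, v⟫) := by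
    rw [hw]; field_simp
  have hgv : ⟪v, G⟫ = ⟪G, v⟫ := real_inner_comm G v
  have hvu : ⟪v, u⟫ = ⟪u, v⟫ := real_inner_comm u v
  have hexp : ∀ α w : ℝ, h α w = w * ⟪G, v⟫ - α * ‖u‖ ^ 2 +
      (C / 2) * (w ^ 2 * ‖v‖ ^ 2 - 2 * α * w * ⟪u, v⟫ + α ^ 2 * ‖u‖ ^ 2) := by
    intro α w
    rw [hh]
    have hnorm : ‖w • v - α • u‖ ^ 2 =
        w ^ 2 * ‖v‖ ^ 2 - 2 * α * w * ⟪u, v⟫ + α ^ 2 * ‖u‖ ^ 2 := by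
      rw [← real_inner_self_eq_norm_sq]
      simp only [inner_sub_left, inner_sub_right, real_inner_smul_left, real_inner_smul_right,
        real_inner_self_eq_norm_sq, hvu, norm_smul, Real.norm_eq_abs, mul_pow, sq_abs]
      ring
    have hin : ⟪w • v - α • u, G⟫ = w * ⟪G, v⟫ - α * ‖u‖ ^ 2 := by
      simp only [inner_sub_left, real_inner_smul_left, hgv, huG]
    rw [hnorm, hin]
  intro α w
  rw [hexp, hexp]
  exact aux_quadratic_min (‖u‖ ^ 2) (‖v‖ ^ 2) ⟪u, v⟫ ⟪G, v⟫ C Δ αstar wstar α w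
    ha0 hC hΔ hΔ0 hA hW
end
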